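/- (Theorem 2, core inequality.) Let 𝒳, 𝒴, 𝒬, 𝒵 be finite nonempty sets, let μ_1, …, μ_M (M ≥ 1) be probability measures on 𝒳 × 𝒴, let f₂ : 𝒳 → 𝒬 and k : 𝒬 → 𝒵, and set f₁ = k ∘ f₂ (so the feature-extraction process factors as X → Q → Z). For each i, let ξ_i be the pushforward of μ_i under (x, y) ↦ (f₂(x), y), and let ν_i be the pushforward of μ_i under (x, y) ↦ (f₁(x), y). If ν_1 = ν_2 = ⋯ = ν_M (domain invariance of the features Z), then Σ_{i=1}^M H_{ν_i}(Y | Z) − Σ_{i=1}^M H_{ξ_i}(Y | Q) ≥ σ, where σ = Σ_{i=1}^M ( I_{ξ_i}(Q; Y) − min_{1≤j≤M} I_{ξ_j}(Q; Y) ) ≥ 0. -/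
import Mathlib


open scoped ENNReal

/-- A probability mass function on a finite type, given as a real-valued function. -/
def IsPMF {α : Type*} [Fintype α] (p : α → ℝ) : Prop :=
  (∀ a, 0 ≤ p a) ∧ ∑ a, p a = 1

/-- First marginal of a joint distribution on `X × Y`. -/
noncomputable def marg1 {X Y : Type*} [Fintype Y] (μ : X × Y → ℝ) (x : X) : ℝ :=
  ∑ y, μ (x, y)

/-- Second marginal of a joint distribution on `X × Y`. -/
noncomputable def marg2 {X Y : Type*} [Fintype X] (μ : X × Y → ℝ) (y : Y) : ℝ :=
  ∑ x, μ (x, y)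

/-- Mutual information `I_μ(X; Y)` of a joint distribution `μ` on `X × Y`;
terms with `μ p = 0` vanish since `0 * log _ = 0` (and `Real.log 0 = 0`). -/
noncomputable def mutualInfo {X Y : Type*} [Fintype X] [Fintype Y] (μ : X × Y → ℝ) : ℝ :=
  ∑ p : X × Y, μ p * Real.log (μ p / (marg1 μ p.1 * marg2 μ p.2))

/-- Entropy `H_μ(Y)` of the second marginal (with the convention `0 * log 0 = 0`). -/
noncomputable def entropy2 {X Y : Type*} [Fintype X] [Fintype Y] (μ : X × Y → ℝ) : ℝ :=
  -∑ y, marg2 μ y * Real.log (marg2 μ y)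

/-- Conditional entropy `H_μ(Y | X) = H_μ(Y) - I_μ(X; Y)`. -/
noncomputable def condEntropy2 {X Y : Type*} [Fintype X] [Fintype Y] (μ : X × Y → ℝ) : ℝ :=
  entropy2 μ - mutualInfo μ

/-- `-log t`, valued in `[0, ∞]`, with `-log 0 = ∞`. -/
noncomputable def negLog (t : ℝ) : ℝ≥0∞ :=
  if t = 0 then ⊤ else ENNReal.ofReal (-Real.log t)

/-- Expected cross-entropy risk of a stochastic classifier `g : X → Δ(Y)` under a
joint distribution `μ` on `X × Y`, valued in `[0, ∞]`. -/
noncomputable def ceRisk {X Y : Type*} [Fintype X] [Fintype Y]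
    (μ : X × Y → ℝ) (g : X → Y → ℝ) : ℝ≥0∞ :=
  ∑ p : X × Y, ENNReal.ofReal (μ p) * negLog (g p.1 p.2)

/-- Pushforward of a joint distribution `μ` on `X × Y` under `(x, y) ↦ (f x, y)`:
the joint law of `(f(X), Y)`. -/
noncomputable def push {X Y Z : Type*} [Fintype X] [DecidableEq Z]
    (f : X → Z) (μ : X × Y → ℝ) : Z × Y → ℝ :=
  fun p => ∑ x ∈ Finset.univ.filter (fun x => f x = p.1), μ (x, p.2)


set_option linter.unusedSectionVars false

section DPIHelpers

variable {Q Y Z : Type*} [Fintype Q] [Fintype Y] [Fintype Z] [DecidableEq Z]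

lemma push_push' {X : Type*} [Fintype X] [DecidableEq Q] (f : X → Q) (k : Q → Z)
    (μ : X × Y → ℝ) : push k (push f μ) = push (k ∘ f) μ := by
  funext p
  simp only [push, Function.comp]
  rw [Finset.sum_fiberwise_eq_sum_filter]
  congr 1
  ext x
  simp

lemma push_nonneg' (f : Q → Z) (μ : Q × Y → ℝ) (h : ∀ p, 0 ≤ μ p) (p : Z × Y) :
    0 ≤ push f μ p :=
  Finset.sum_nonneg fun _ _ => h _

lemma marg2_push' (f : Q → Z) (μ : Q × Y → ℝ) : marg2 (push f μ) = marg2 μ := by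
  funext y
  simp only [marg2, push]
  exact Finset.sum_fiberwise _ _ _

lemma marg1_push' (f : Q → Z) (μ : Q × Y → ℝ) (z : Z) :
    marg1 (push f μ) z = ∑ q ∈ Finset.univ.filter (fun q => f q = z), marg1 μ q := by
  simp only [marg1, push]
  rw [Finset.sum_comm]

lemma push_expect' (f : Q → Z) (μ : Q × Y → ℝ) (G : Z × Y → ℝ) :
    ∑ p : Z × Y, push f μ p * G p = ∑ p : Q × Y, μ p * G (f p.1, p.2) := by
  rw [Fintype.sum_prod_type]
  calc ∑ z, ∑ y, push f μ (z, y) * G (z, y)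
      = ∑ y, ∑ z, ∑ q ∈ Finset.univ.filter (fun q => f q = z), μ (q, y) * G (f q, y) := by
        rw [Finset.sum_comm]
        refine Finset.sum_congr rfl fun y _ => Finset.sum_congr rfl fun z _ => ?_
        simp only [push, Finset.sum_mul]
        exact Finset.sum_congr rfl fun q hq => by rw [(Finset.mem_filter.1 hq).2]
    _ = ∑ y, ∑ q, μ (q, y) * G (f q, y) :=
        Finset.sum_congr rfl fun y _ => Finset.sum_fiberwise _ _ _
    _ = ∑ p : Q × Y, μ p * G (f p.1, p.2) := by
        rw [Fintype.sum_prod_type, Finset.sum_comm]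

lemma marg1_nonneg' (μ : Q × Y → ℝ) (h : ∀ p, 0 ≤ μ p) (q : Q) : 0 ≤ marg1 μ q :=
  Finset.sum_nonneg fun _ _ => h _

lemma le_marg1' (μ : Q × Y → ℝ) (h : ∀ p, 0 ≤ μ p) (q : Q) (y : Y) : μ (q, y) ≤ marg1 μ q :=
  Finset.single_le_sum (fun y' _ => h (q, y')) (Finset.mem_univ y)

lemma le_marg2' (μ : Q × Y → ℝ) (h : ∀ p, 0 ≤ μ p) (q : Q) (y : Y) : μ (q, y) ≤ marg2 μ y :=
  Finset.single_le_sum (fun q' _ => h (q', y)) (Finset.mem_univ q)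

lemma le_push' (f : Q → Z) (μ : Q × Y → ℝ) (h : ∀ p, 0 ≤ μ p) (q : Q) (y : Y) :
    μ (q, y) ≤ push f μ (f q, y) :=
  Finset.single_le_sum (f := fun q' => μ (q', y)) (fun _ _ => h _) (by simp)

lemma mutualInfo_push_le' (k : Q → Z) (μ : Q × Y → ℝ) (h0 : ∀ p, 0 ≤ μ p) :
    mutualInfo (push k μ) ≤ mutualInfo μ := by
  set ν := push k μ with hν
  have hν0 : ∀ p, 0 ≤ ν p := push_nonneg' k μ h0
  set b : Q × Y → ℝ := fun p =>
    if marg1 ν (k p.1) = 0 then 0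
    else ν (k p.1, p.2) * marg1 μ p.1 / marg1 ν (k p.1) with hb
  have hb0 : ∀ p, 0 ≤ b p := by
    intro p
    simp only [hb]
    split
    · exact le_refl 0
    · exact div_nonneg (mul_nonneg (hν0 _) (marg1_nonneg' μ h0 _)) (marg1_nonneg' ν hν0 _)
  have hmargle : ∀ q, marg1 μ q ≤ marg1 ν (k q) := by
    intro q
    rw [hν, marg1_push']
    exact Finset.single_le_sum (fun q' _ => marg1_nonneg' μ h0 q') (by simp)
  have hsumb : ∑ p : Q × Y, b p = ∑ p : Q × Y, μ p := by
    rw [Fintype.sum_prod_type, Fintype.sum_prod_type]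
    refine Finset.sum_congr rfl fun q _ => ?_
    by_cases hz : marg1 ν (k q) = 0
    · have h1 : marg1 μ q = 0 :=
        le_antisymm (hz ▸ hmargle q) (marg1_nonneg' μ h0 q)
      simp only [hb, hz, if_pos]
      simpa [marg1] using h1.symm
    · simp only [hb, hz, if_neg, not_false_iff]
      rw [← Finset.sum_div, ← Finset.sum_mul]
      have : (∑ y, ν (k q, y)) = marg1 ν (k q) := rfl
      rw [this, mul_comm, mul_div_assoc, div_self hz, mul_one]
      rfl
  have hrw : mutualInfo ν
      = ∑ p : Q × Y, μ p * Real.log (ν (k p.1, p.2) / (marg1 ν (k p.1) * marg2 ν p.2)) := by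
    unfold mutualInfo
    exact push_expect' k μ (fun p => Real.log (ν p / (marg1 ν p.1 * marg2 ν p.2)))
  have key : ∀ p : Q × Y,
      μ p * Real.log (ν (k p.1, p.2) / (marg1 ν (k p.1) * marg2 ν p.2))
      ≤ μ p * Real.log (μ p / (marg1 μ p.1 * marg2 μ p.2)) + (b p - μ p) := by
    rintro ⟨q, y⟩
    rcases eq_or_lt_of_le (h0 (q, y)) with he | hpos
    · rw [← he]
      simpa using hb0 (q, y)
    · have hm1 : 0 < marg1 μ q := lt_of_lt_of_le hpos (le_marg1' μ h0 q y)
      have hm2 : 0 < marg2 μ y := lt_of_lt_of_le hpos (le_marg2' μ h0 q y)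
      have hn : 0 < ν (k q, y) := lt_of_lt_of_le hpos (le_push' k μ h0 q y)
      have hn1 : 0 < marg1 ν (k q) := lt_of_lt_of_le hm1 (hmargle q)
      have hm2' : marg2 ν y = marg2 μ y := by rw [hν, marg2_push']
      have hbval : b (q, y) = ν (k q, y) * marg1 μ q / marg1 ν (k q) := if_neg hn1.ne'
      set B := ν (k q, y) * marg1 μ q / marg1 ν (k q) with hB
      have hBpos : 0 < B := div_pos (mul_pos hn hm1) hn1
      have hlog : Real.log (ν (k q, y) / (marg1 ν (k q) * marg2 ν y))
          = Real.log (μ (q, y) / (marg1 μ q * marg2 μ y)) + Real.log (B / μ (q, y)) := by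
        rw [hm2', hB]
        rw [Real.log_div hn.ne' (mul_pos hn1 hm2).ne',
            Real.log_div hpos.ne' (mul_pos hm1 hm2).ne',
            Real.log_div (div_pos (mul_pos hn hm1) hn1).ne' hpos.ne',
            Real.log_div (mul_pos hn hm1).ne' hn1.ne',
            Real.log_mul hn1.ne' hm2.ne', Real.log_mul hm1.ne' hm2.ne',
            Real.log_mul hn.ne' hm1.ne']
        ring
      rw [hlog, hbval, mul_add]
      have h1 : Real.log (B / μ (q, y)) ≤ B / μ (q, y) - 1 :=
        Real.log_le_sub_one_of_pos (div_pos hBpos hpos)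
      have h2 : μ (q, y) * Real.log (B / μ (q, y)) ≤ B - μ (q, y) := by
        have := mul_le_mul_of_nonneg_left h1 (le_of_lt hpos)
        calc μ (q, y) * Real.log (B / μ (q, y)) ≤ μ (q, y) * (B / μ (q, y) - 1) := this
          _ = B - μ (q, y) := by field_simp
      linarith
  calc mutualInfo ν
      = ∑ p : Q × Y, μ p * Real.log (ν (k p.1, p.2) / (marg1 ν (k p.1) * marg2 ν p.2)) := hrw
    _ ≤ ∑ p : Q × Y, (μ p * Real.log (μ p / (marg1 μ p.1 * marg2 μ p.2)) + (b p - μ p)) :=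
        Finset.sum_le_sum fun p _ => key p
    _ = mutualInfo μ + (∑ p : Q × Y, b p - ∑ p : Q × Y, μ p) := by
        rw [Finset.sum_add_distrib, Finset.sum_sub_distrib]
        rfl
    _ = mutualInfo μ := by rw [hsumb]; ring

end DPIHelpers

/-- Theorem 2, core inequality: with the feature-extraction process factoring as
`X → Q → Z` (`f₁ = k ∘ f₂`), if the joint laws `ν_i` of `(f₁(X_i), Y)` are
domain-invariant, then
`∑ i, H_{ν_i}(Y | Z) - ∑ i, H_{ξ_i}(Y | Q) ≥ σ ≥ 0`, where `ξ_i` is the joint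
law of `(f₂(X_i), Y)` and
`σ = ∑ i, (I_{ξ_i}(Q; Y) - min_{1 ≤ j ≤ M} I_{ξ_j}(Q; Y))` is the information
gap of the intermediate state across the source domains. -/
theorem theorem2_core_inequality
    {X Y Q Z : Type*} [Fintype X] [Fintype Y] [Fintype Q] [Fintype Z]
    [Nonempty X] [Nonempty Y] [Nonempty Q] [Nonempty Z]
    [DecidableEq Q] [DecidableEq Z]
    (M : ℕ) (hM : 1 ≤ M) (μ : Fin M → X × Y → ℝ) (hμ : ∀ i, IsPMF (μ i))
    (f₂ : X → Q) (k : Q → Z)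
    (hinv : ∀ i j, push (k ∘ f₂) (μ i) = push (k ∘ f₂) (μ j)) :
    ∑ i, (mutualInfo (push f₂ (μ i))
        - Finset.univ.inf' ⟨⟨0, hM⟩, Finset.mem_univ _⟩
            (fun j => mutualInfo (push f₂ (μ j))))
      ≤ ∑ i, condEntropy2 (push (k ∘ f₂) (μ i)) - ∑ i, condEntropy2 (push f₂ (μ i))
    ∧ 0 ≤ ∑ i, (mutualInfo (push f₂ (μ i))
        - Finset.univ.inf' ⟨⟨0, hM⟩, Finset.mem_univ _⟩
            (fun j => mutualInfo (push f₂ (μ j)))) := by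
  have hI : ∀ i : Fin M, mutualInfo (push (k ∘ f₂) (μ i)) ≤
      Finset.univ.inf' ⟨⟨0, hM⟩, Finset.mem_univ _⟩
        (fun j => mutualInfo (push f₂ (μ j))) := by
    intro i
    apply Finset.le_inf'
    intro j _
    rw [hinv i j, ← push_push' f₂ k (μ j)]
    exact mutualInfo_push_le' k (push f₂ (μ j)) (push_nonneg' f₂ (μ j) (hμ j).1)
  have hEnt : ∀ i, condEntropy2 (push (k ∘ f₂) (μ i)) - condEntropy2 (push f₂ (μ i))
      = mutualInfo (push f₂ (μ i)) - mutualInfo (push (k ∘ f₂) (μ i)) := by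
    intro i
    have h2 : entropy2 (push (k ∘ f₂) (μ i)) = entropy2 (push f₂ (μ i)) := by
      unfold entropy2
      rw [marg2_push', marg2_push']
    unfold condEntropy2
    rw [h2]
    ring
  constructor
  · rw [← Finset.sum_sub_distrib]
    apply Finset.sum_le_sum
    intro i _
    have h1 := hI i
    have h2 := hEnt i
    linarith
  · apply Finset.sum_nonneg
    intro i _
    have := Finset.inf'_le (fun j => mutualInfo (push f₂ (μ j))) (Finset.mem_univ i)
    linarith [this]
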